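/- Let V be a purely even restricted vertex algebra with A = V₀, Ω ⊂ V₁ the span of elements a∂b (a, b ∈ A), and 𝒯 = V₁/Ω. Then the operation _{(0)}: V₁ ⊗ V₁ → V₁ descends to a skew-symmetric bracket on 𝒯 satisfying the Jacobi identity, making 𝒯 a Lie algebra. -/

import Mathlib

open scoped BigOperators

/-- The generalized binomial coefficient `C(m, j)` for `m ∈ ℤ`, as a complex number. -/
noncomputable def binom (m : ℤ) (j : ℕ) : ℂ :=
  (∏ i ∈ Finset.range j, ((m : ℂ) - (i : ℂ))) / (Nat.factorial j : ℂ)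

/-- A purely even restricted graded vertex algebra: a vertex algebra (vacuum, Fourier modes
`coeff a n = a_{(n)}`, translation operator `T = ∂`, vacuum axiom, translation invariance and
the Borcherds identity) together with a grading by conformal weights `wt : ℤ → Submodule ℂ V`
(the eigenspace decomposition of the Hamiltonian `H`), with no negative conformal weights,
`vac` of weight `0`, and such that `a_{(n)} : V_Δ ⊗ V_{Δ'} → V_{Δ+Δ'-n-1}`. -/
structure RestrictedVA (V : Type*) [AddCommGroup V] [Module ℂ V] where
  vac : V
  coeff : V → ℤ → Module.End ℂ V
  T : Module.End ℂ V
  wt : ℤ → Submodule ℂ V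
  coeff_add : ∀ (a b : V) (n : ℤ), coeff (a + b) n = coeff a n + coeff b n
  coeff_smul : ∀ (c : ℂ) (a : V) (n : ℤ), coeff (c • a) n = c • coeff a n
  truncation : ∀ a b : V, ∃ N : ℤ, ∀ n ≥ N, coeff a n b = 0
  vac_field : ∀ n : ℤ, coeff vac n = if n = -1 then (1 : Module.End ℂ V) else 0
  T_vac : T vac = 0
  creation_nonneg : ∀ (a : V) (n : ℤ), 0 ≤ n → coeff a n vac = 0
  creation_neg_one : ∀ a : V, coeff a (-1) vac = a
  translation : ∀ (a : V) (n : ℤ),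
    T * coeff a n - coeff a n * T = ((-n : ℤ) : ℂ) • coeff a (n - 1)
  borcherds : ∀ (a b c : V) (m n k : ℤ),
    (∑ᶠ j : ℕ, binom m j • coeff (coeff a (n + j) b) (m + k - j) c) =
      (∑ᶠ j : ℕ, ((-1 : ℂ) ^ j * binom n j) • coeff a (n + m - j) (coeff b (k + j) c)) -
      (∑ᶠ j : ℕ, ((-1 : ℂ) ^ ((j : ℤ) + n) * binom n j) •
        coeff b (n + k - j) (coeff a (m + j) c))
  wt_neg : ∀ d : ℤ, d < 0 → wt d = ⊥
  vac_wt : vac ∈ wt 0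
  wt_indep : ∀ d : ℤ, Disjoint (wt d) (⨆ (e : ℤ) (_ : e ≠ d), wt e)
  wt_top : (⨆ d : ℤ, wt d) = ⊤
  wt_coeff : ∀ {a b : V} {d e : ℤ} (n : ℤ),
    a ∈ wt d → b ∈ wt e → coeff a n b ∈ wt (d + e - n - 1)

/-- The subspace `Ω ⊆ V₁` spanned by the elements `a ∂b` with `a, b ∈ A = V₀`
(the product being `a_{(-1)}`). -/
def RestrictedVA.Omega {V : Type*} [AddCommGroup V] [Module ℂ V] (W : RestrictedVA V) :
    Submodule ℂ V :=
  Submodule.span ℂ {x | ∃ a b : V, a ∈ W.wt 0 ∧ b ∈ W.wt 0 ∧ x = W.coeff a (-1) (W.T b)}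

/-!
Everything comes from two specialisations of the Borcherds identity, the associativity formula
(`m = 0`) and the commutator formula (`n = 0`), whose sums the grading truncates to one or two
terms. Skew-symmetry modulo `Ω` is `x_{(0)}y + y_{(0)}x = ∂(x_{(1)}y)` with `∂c = 𝟙 ∂c ∈ Ω`.
Stability of `Ω` is `(a∂u)_{(0)}c = ∂u·(a_{(0)}c) - ∂a·(u_{(0)}c)` with `(∂u)·w = w·∂u` for
`u, w ∈ A`. The Jacobi identity holds because `x_{(0)}` is a derivation of `_{(0)}`.
-/

@[simp] lemma binom_zero_right (m : ℤ) : binom m 0 = 1 := by simp [binom]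

lemma binom_succ (m : ℤ) (j : ℕ) :
    binom m (j + 1) = binom m j * ((m : ℂ) - j) / (j + 1) := by
  have hf : ((j + 1).factorial : ℂ) = (j + 1) * j.factorial := by
    rw [Nat.factorial_succ]; push_cast; ring
  simp only [binom, Finset.prod_range_succ, hf]
  rw [div_mul_eq_mul_div, div_div, mul_comm ((j : ℂ) + 1)]

lemma binom_eq_zero_of_lt {n : ℤ} {j : ℕ} (hn : 0 ≤ n) (h : n < j) : binom n j = 0 := by
  rw [binom, Finset.prod_eq_zero (i := n.toNat) (Finset.mem_range.mpr (by omega))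
    (by rw [← Int.cast_natCast, Int.toNat_of_nonneg hn, sub_self]), zero_div]

lemma binom_neg_one (j : ℕ) : binom (-1) j = (-1) ^ j := by
  induction j with
  | zero => simp
  | succ j ih =>
    rw [binom_succ, ih]
    field_simp
    ring

lemma binom_neg_two (j : ℕ) : binom (-2) j = (-1) ^ j * (j + 1) := by
  induction j with
  | zero => simp
  | succ j ih =>
    rw [binom_succ, ih]
    field_simp
    push_cast
    ring

namespace RestrictedVA

variable {V : Type*} [AddCommGroup V] [Module ℂ V] (W : RestrictedVA V)

@[simp] lemma coeff_zero_left (n : ℤ) : W.coeff 0 n = 0 := by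
  simpa using W.coeff_smul 0 0 n

lemma coeff_vac_apply (n : ℤ) (c : V) : W.coeff W.vac n c = if n = -1 then c else 0 := by
  rw [W.vac_field]; split_ifs <;> rfl

lemma coeff_mem_wt {a b : V} {d e f : ℤ} (n : ℤ) (ha : a ∈ W.wt d) (hb : b ∈ W.wt e)
    (h : d + e - n - 1 = f) : W.coeff a n b ∈ W.wt f :=
  h ▸ W.wt_coeff n ha hb

lemma coeff_eq_zero_of_wt_neg {a b : V} {d e : ℤ} (n : ℤ) (ha : a ∈ W.wt d) (hb : b ∈ W.wt e)
    (h : d + e - n - 1 < 0) : W.coeff a n b = 0 := by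
  simpa [W.wt_neg _ h] using W.wt_coeff n ha hb

lemma T_eq_coeff_vac (b : V) : W.T b = W.coeff b (-2) W.vac := by
  have h := LinearMap.congr_fun (W.translation b (-1)) W.vac
  simpa [W.creation_neg_one, W.T_vac] using h

lemma T_mem_wt {b : V} {d : ℤ} (hb : b ∈ W.wt d) : W.T b ∈ W.wt (d + 1) := by
  rw [T_eq_coeff_vac]; exact W.coeff_mem_wt _ hb W.vac_wt (by ring)

lemma T_mem_Omega {c : V} (hc : c ∈ W.wt 0) : W.T c ∈ W.Omega :=
  Submodule.subset_span ⟨W.vac, c, W.vac_wt, hc, by rw [coeff_vac_apply, if_pos rfl]⟩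

lemma associativity_formula (a b c : V) (n k : ℤ) :
    W.coeff (W.coeff a n b) k c =
      (∑ᶠ j : ℕ, ((-1 : ℂ) ^ j * binom n j) • W.coeff a (n - j) (W.coeff b (k + j) c)) -
      ∑ᶠ j : ℕ, ((-1 : ℂ) ^ ((j : ℤ) + n) * binom n j) •
        W.coeff b (n + k - j) (W.coeff a j c) := by
  have h := W.borcherds a b c 0 n k
  rw [finsum_eq_single _ 0 fun j hj => by
    rw [binom_eq_zero_of_lt le_rfl (by omega), zero_smul]] at h
  simpa only [add_zero, zero_add, Nat.cast_zero, sub_zero, binom_zero_right, one_smul] using h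

lemma commutator_formula (a b c : V) (m k : ℤ) :
    W.coeff a m (W.coeff b k c) - W.coeff b k (W.coeff a m c) =
      ∑ᶠ j : ℕ, binom m j • W.coeff (W.coeff a j b) (m + k - j) c := by
  have h := W.borcherds a b c m 0 k
  rw [finsum_eq_single (fun j : ℕ => ((-1 : ℂ) ^ j * binom 0 j) • _) 0 fun j hj => by
    rw [binom_eq_zero_of_lt le_rfl (by omega), mul_zero, zero_smul]] at h
  rw [finsum_eq_single (fun j : ℕ => ((-1 : ℂ) ^ ((j : ℤ) + 0) * binom 0 j) • _) 0 fun j hj => by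
    rw [binom_eq_zero_of_lt le_rfl (by omega), mul_zero, zero_smul]] at h
  simp only [add_zero, zero_add, Nat.cast_zero, sub_zero, binom_zero_right, one_smul,
    pow_zero, zpow_zero, mul_one] at h
  exact h.symm

lemma coeff_T_apply (a c : V) (k : ℤ) :
    W.coeff (W.T a) k c = -(k : ℂ) • W.coeff a (k - 1) c := by
  have h := W.associativity_formula a W.vac c (-2) k
  rw [← T_eq_coeff_vac] at h
  simp only [coeff_vac_apply, binom_neg_two] at h
  have hsq (i : ℕ) : ((-1 : ℂ) ^ i) * (-1) ^ i = 1 := by rw [← mul_pow]; norm_num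
  rw [h]
  rcases lt_trichotomy k 0 with hk | rfl | hk
  · obtain ⟨i, rfl⟩ : ∃ i : ℕ, k = -1 - i := ⟨(-1 - k).toNat, by omega⟩
    rw [finsum_eq_single _ i fun j hj => by rw [if_neg (by omega), map_zero, smul_zero],
      finsum_eq_zero_of_forall_eq_zero fun j => by rw [if_neg (by omega), smul_zero],
      if_pos (by ring), sub_zero, ← mul_assoc, hsq, show (-2 : ℤ) - i = -1 - i - 1 by ring]
    push_cast
    congr 1
    ring
  · rw [finsum_eq_zero_of_forall_eq_zero fun j => by rw [if_neg (by omega), map_zero, smul_zero],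
      finsum_eq_zero_of_forall_eq_zero fun j => by rw [if_neg (by omega), smul_zero]]
    simp
  · obtain ⟨i, rfl⟩ : ∃ i : ℕ, k = i + 1 := ⟨(k - 1).toNat, by omega⟩
    have hz : (-1 : ℂ) ^ ((i : ℤ) + -2) = (-1) ^ i := by
      rw [zpow_add₀ (by norm_num), zpow_natCast]; norm_num
    rw [finsum_eq_zero_of_forall_eq_zero fun j => by rw [if_neg (by omega), map_zero, smul_zero],
      finsum_eq_single _ i fun j hj => by rw [if_neg (by omega), smul_zero],
      if_pos (by ring), hz, ← mul_assoc, hsq, zero_sub, ← neg_smul, add_sub_cancel_right]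
    push_cast
    ring_nf

lemma coeff_neg_one_comm {a b : V} (h : ∀ j : ℕ, W.coeff a j b = 0) :
    W.coeff a (-1) b = W.coeff b (-1) a := by
  have hc := W.commutator_formula a b W.vac (-1) (-1)
  simp only [creation_neg_one, h, coeff_zero_left, LinearMap.zero_apply, smul_zero,
    finsum_zero] at hc
  exact sub_eq_zero.mp hc

lemma coeff_zero_add_coeff_zero {a b : V} (h : ∀ n : ℤ, 2 ≤ n → W.coeff a n b = 0) :
    W.coeff a 0 b + W.coeff b 0 a = W.T (W.coeff a 1 b) := by
  have hb := W.borcherds a b W.vac (-1) 1 (-1)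
  have hcreate (x : V) (j : ℕ) (hj : j ≠ 0) (s : ℂ) (f : Module.End ℂ V) :
      (s * binom 1 j) • f (W.coeff x (-1 + j) W.vac) = 0 := by
    rcases Nat.lt_or_ge j 2 with hj2 | hj2
    · rw [W.creation_nonneg x _ (by omega), map_zero, smul_zero]
    · rw [binom_eq_zero_of_lt zero_le_one (by omega), mul_zero, zero_smul]
  rw [finsum_eq_single _ 0 fun j hj => by rw [h _ (by omega), coeff_zero_left,
      LinearMap.zero_apply, smul_zero],
    finsum_eq_single _ 0 fun j hj => hcreate b j hj _ _,
    finsum_eq_single _ 0 fun j hj => hcreate a j hj _ _] at hb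
  norm_num [creation_neg_one, ← T_eq_coeff_vac] at hb
  exact hb.symm

lemma coeff_coeff_neg_one_T_zero_apply {a u c : V} (ha : ∀ n : ℤ, 1 ≤ n → W.coeff a n c = 0)
    (hu : ∀ n : ℤ, 1 ≤ n → W.coeff u n c = 0) :
    W.coeff (W.coeff a (-1) (W.T u)) 0 c =
      W.coeff (W.T u) (-1) (W.coeff a 0 c) - W.coeff (W.T a) (-1) (W.coeff u 0 c) := by
  rw [associativity_formula, finsum_eq_single _ 1 fun j hj => by
      rw [coeff_T_apply]
      rcases Nat.eq_zero_or_pos j with rfl | hj0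
      · simp
      · rw [hu _ (by omega), smul_zero, map_zero, smul_zero],
    finsum_eq_single _ 0 fun j hj => by rw [ha _ (by omega), map_zero, smul_zero]]
  norm_num [binom_neg_one, coeff_T_apply]
  abel

lemma coeff_zero_coeff_zero (x y z : V) :
    W.coeff (W.coeff x 0 y) 0 z = W.coeff x 0 (W.coeff y 0 z) - W.coeff y 0 (W.coeff x 0 z) := by
  rw [commutator_formula, finsum_eq_single _ 0 fun j hj => by
    rw [binom_eq_zero_of_lt le_rfl (by omega), zero_smul]]
  simp

lemma T_coeff_neg_one_mem_Omega {u w : V} (hu : u ∈ W.wt 0) (hw : w ∈ W.wt 0) :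
    W.coeff (W.T u) (-1) w ∈ W.Omega := by
  rw [W.coeff_neg_one_comm fun j => by
    rw [coeff_T_apply]
    rcases Nat.eq_zero_or_pos j with rfl | hj
    · simp
    · rw [W.coeff_eq_zero_of_wt_neg _ hu hw (by omega), smul_zero]]
  exact Submodule.subset_span ⟨w, u, hw, hu, rfl⟩

lemma Omega_le_wt_one : W.Omega ≤ W.wt 1 :=
  Submodule.span_le.mpr fun _ ⟨_, _, ha, hb, hx⟩ =>
    hx ▸ W.coeff_mem_wt _ ha (W.T_mem_wt hb) (by ring)

lemma coeff_zero_mem_wt_one {x y : V} (hx : x ∈ W.wt 1) (hy : y ∈ W.wt 1) :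
    W.coeff x 0 y ∈ W.wt 1 :=
  W.coeff_mem_wt 0 hx hy (by ring)

lemma coeff_zero_add_coeff_zero_mem_Omega {x y : V} (hx : x ∈ W.wt 1) (hy : y ∈ W.wt 1) :
    W.coeff x 0 y + W.coeff y 0 x ∈ W.Omega := by
  rw [W.coeff_zero_add_coeff_zero fun n hn => W.coeff_eq_zero_of_wt_neg n hx hy (by omega)]
  exact W.T_mem_Omega (W.coeff_mem_wt 1 hx hy (by ring))

lemma coeff_zero_mem_Omega_of_left_mem_Omega {x c : V} (hx : x ∈ W.Omega) (hc : c ∈ W.wt 1) :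
    W.coeff x 0 c ∈ W.Omega := by
  induction hx using Submodule.span_induction with
  | mem _ h =>
    obtain ⟨a, u, ha, hu, rfl⟩ := h
    have hvanish {b : V} (hb : b ∈ W.wt 0) (n : ℤ) (hn : 1 ≤ n) : W.coeff b n c = 0 :=
      W.coeff_eq_zero_of_wt_neg n hb hc (by omega)
    have hbracket {b : V} (hb : b ∈ W.wt 0) : W.coeff b 0 c ∈ W.wt 0 :=
      W.coeff_mem_wt 0 hb hc (by ring)
    rw [W.coeff_coeff_neg_one_T_zero_apply (hvanish ha) (hvanish hu)]
    exact sub_mem (W.T_coeff_neg_one_mem_Omega hu (hbracket ha))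
      (W.T_coeff_neg_one_mem_Omega ha (hbracket hu))
  | zero => simp
  | add _ _ _ _ hx hy => rw [coeff_add]; exact add_mem hx hy
  | smul s _ _ hx => rw [coeff_smul]; exact Submodule.smul_mem _ s hx

lemma coeff_zero_mem_Omega_of_right_mem_Omega {x c : V} (hc : c ∈ W.wt 1)
    (hx : x ∈ W.Omega) : W.coeff c 0 x ∈ W.Omega := by
  have hsum := W.coeff_zero_add_coeff_zero_mem_Omega (W.Omega_le_wt_one hx) hc
  simpa using sub_mem hsum (W.coeff_zero_mem_Omega_of_left_mem_Omega hx hc)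

lemma jacobi_mem_Omega {x y z : V} (hx : x ∈ W.wt 1) (hy : y ∈ W.wt 1) (hz : z ∈ W.wt 1) :
    W.coeff (W.coeff x 0 y) 0 z + W.coeff (W.coeff y 0 z) 0 x +
      W.coeff (W.coeff z 0 x) 0 y ∈ W.Omega := by
  -- `x_{(0)}` is a derivation, so the Jacobi sum is a combination of skew-symmetry defects.
  have key : W.coeff (W.coeff x 0 y) 0 z + W.coeff (W.coeff y 0 z) 0 x +
      W.coeff (W.coeff z 0 x) 0 y =
      (W.coeff (W.coeff y 0 z) 0 x + W.coeff x 0 (W.coeff y 0 z)) +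
      (W.coeff (W.coeff z 0 x) 0 y + W.coeff y 0 (W.coeff z 0 x)) -
      W.coeff y 0 (W.coeff x 0 z + W.coeff z 0 x) := by
    rw [coeff_zero_coeff_zero, map_add]
    abel
  rw [key]
  refine sub_mem (add_mem ?_ ?_) ?_
  · exact W.coeff_zero_add_coeff_zero_mem_Omega (W.coeff_zero_mem_wt_one hy hz) hx
  · exact W.coeff_zero_add_coeff_zero_mem_Omega (W.coeff_zero_mem_wt_one hz hx) hy
  · exact W.coeff_zero_mem_Omega_of_right_mem_Omega hy
      (W.coeff_zero_add_coeff_zero_mem_Omega hx hz)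

end RestrictedVA

/-- In a purely even restricted vertex algebra with `A = V₀`,
`Ω ⊆ V₁` the span of the elements `a∂b` (`a, b ∈ A`), the operation
`_{(0)} : V₁ ⊗ V₁ → V₁` descends to a skew-symmetric bracket on `𝒯 = V₁/Ω` satisfying the
Jacobi identity, i.e. `𝒯` is a Lie algebra.  Concretely: `Ω ⊆ V₁`, the operation preserves
`V₁`, it maps `Ω ⊗ V₁ + V₁ ⊗ Ω` into `Ω`, it is skew-symmetric modulo `Ω`, and it satisfies
the Jacobi identity modulo `Ω`. -/
theorem quotient_Lie_algebra {V : Type*} [AddCommGroup V] [Module ℂ V]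
    (W : RestrictedVA V) :
    (W.Omega ≤ W.wt 1) ∧
    (∀ x y : V, x ∈ W.wt 1 → y ∈ W.wt 1 → W.coeff x 0 y ∈ W.wt 1) ∧
    (∀ x y : V, x ∈ W.Omega → y ∈ W.wt 1 → W.coeff x 0 y ∈ W.Omega ∧ W.coeff y 0 x ∈ W.Omega) ∧
    (∀ x y : V, x ∈ W.wt 1 → y ∈ W.wt 1 → W.coeff x 0 y + W.coeff y 0 x ∈ W.Omega) ∧
    (∀ x y z : V, x ∈ W.wt 1 → y ∈ W.wt 1 → z ∈ W.wt 1 →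
      W.coeff (W.coeff x 0 y) 0 z + W.coeff (W.coeff y 0 z) 0 x +
        W.coeff (W.coeff z 0 x) 0 y ∈ W.Omega) :=
  ⟨W.Omega_le_wt_one, fun _ _ => W.coeff_zero_mem_wt_one,
    fun _ _ hx hy => ⟨W.coeff_zero_mem_Omega_of_left_mem_Omega hx hy,
      W.coeff_zero_mem_Omega_of_right_mem_Omega hy hx⟩,
    fun _ _ => W.coeff_zero_add_coeff_zero_mem_Omega, fun _ _ _ => W.jacobi_mem_Omega⟩
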